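/- arXiv:1908.02253 — 2 statements merged into one kernel-verified Lean document; each statement's English description precedes it below -/
import Mathlib

section
/- (Claim 3) Let k ≥ 1, let A ⊆ [k]^2 be a compressed set, and let B be the initial segment of the ≤-order on [k]^2 with |B| = |A|. Then |d(A)| ≥ |d(B)|. -/
open Finset
open scoped Classical

/-- `R_i(x)`: the set of coordinates of `x` equal to `i`.
The ambient alphabet is `[k+1] = {0,…,k}`. -/
noncomputable def rset {k N : ℕ} (x : Fin N → Fin (k + 1)) (i : ℕ) : Finset (Fin N) :=
  Finset.univ.filter fun j => (x j : ℕ) = i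

/-- the strict binary order on finite sets of coordinates:
`X <_bin Y` iff `X ≠ Y` and `max (X Δ Y) ∈ Y`. -/
def binLT {N : ℕ} (X Y : Finset (Fin N)) : Prop :=
  ∃ m ∈ Y, m ∉ X ∧ ∀ j : Fin N, ((j ∈ X ∧ j ∉ Y) ∨ (j ∈ Y ∧ j ∉ X)) → j ≤ m

/-- the strict `≤`-order on `[k+1]^N`: `x < y` iff `|R_0(x)| > |R_0(y)|`, or
`|R_0(x)| = |R_0(y)|` and for the largest `i` with `R_i(x) ≠ R_i(y)` we have
`max (R_i(x) Δ R_i(y)) ∈ R_i(y)`. -/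
def plt {k N : ℕ} (x y : Fin N → Fin (k + 1)) : Prop :=
  (rset y 0).card < (rset x 0).card ∨
    ((rset x 0).card = (rset y 0).card ∧
      ∃ i : ℕ, binLT (rset x i) (rset y i) ∧ ∀ j : ℕ, i < j → rset x j = rset y j)

/-- the `≤`-order on `[k+1]^N`. -/
def ple {k N : ℕ} (x y : Fin N → Fin (k + 1)) : Prop := x = y ∨ plt x y

/-- `B` is an initial segment of the `≤`-order. -/
def isInitSeg {k N : ℕ} (B : Finset (Fin N → Fin (k + 1))) : Prop :=
  ∀ y ∈ B, ∀ x, ple x y → x ∈ B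

/-- the `d`-shadow: all points obtained from a point of `A` by flipping one
nonzero coordinate to `0`. -/
noncomputable def dShadow {k N : ℕ} (A : Finset (Fin N → Fin (k + 1))) :
    Finset (Fin N → Fin (k + 1)) :=
  A.biUnion fun x =>
    (Finset.univ.filter fun i => x i ≠ 0).image fun i => Function.update x i 0

/-- the initial segment of the `≤`-order on `[k+1]^N` of cardinality `m`. -/
noncomputable def initSeg (k N m : ℕ) : Finset (Fin N → Fin (k + 1)) :=
  Finset.univ.filter fun x => (Finset.univ.filter fun y => ple y x).card ≤ m

/-- the `C_s`-compression of `A ⊆ [k+1]^(n+1)`: replace each slice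
`A_{s,t} = {y : t_s y ∈ A}` by the initial segment of the same size. -/
noncomputable def compress {k n : ℕ} (s : Fin (n + 1)) (A : Finset (Fin (n + 1) → Fin (k + 1))) :
    Finset (Fin (n + 1) → Fin (k + 1)) :=
  Finset.univ.biUnion fun t : Fin (k + 1) =>
    (initSeg k n
        (Finset.univ.filter fun y : Fin n → Fin (k + 1) => s.insertNth t y ∈ A).card).image
      fun y => s.insertNth t y

/-- `A` is compressed if every `C_s`-compression fixes it. -/
def IsCompressed {k n : ℕ} (A : Finset (Fin (n + 1) → Fin (k + 1))) : Prop :=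
  ∀ s : Fin (n + 1), compress s A = A

/-- `B_r`: points with exactly `r` zero coordinates. -/
noncomputable def Bexact (k N r : ℕ) : Finset (Fin N → Fin (k + 1)) :=
  Finset.univ.filter fun x => (rset x 0).card = r

/-- `B_{≥r}`: points with at least `r` zero coordinates. -/
noncomputable def Bge (k N r : ℕ) : Finset (Fin N → Fin (k + 1)) :=
  Finset.univ.filter fun x => r ≤ (rset x 0).card

/-- `m(x)`: the largest coordinate value of `x`. -/
noncomputable def mval {k N : ℕ} (x : Fin N → Fin (k + 1)) : ℕ :=
  Finset.univ.sup fun i => (x i : ℕ)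

/-- the class `C_X`: points with maximal coordinate `s`, attained exactly on `X`,
and exactly `r` zero coordinates. -/
noncomputable def classSet (k N s r : ℕ) (X : Finset (Fin N)) : Finset (Fin N → Fin (k + 1)) :=
  Finset.univ.filter fun x => mval x = s ∧ rset x s = X ∧ (rset x 0).card = r

/-- `[m]^N = {0,…,m−1}^N`. -/
noncomputable def box (k N m : ℕ) : Finset (Fin N → Fin (k + 1)) :=
  Finset.univ.filter fun x => ∀ i, (x i : ℕ) < m

/-- `{1,…,s−1}^N`. -/
noncomputable def box1 (k N s : ℕ) : Finset (Fin N → Fin (k + 1)) :=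
  Finset.univ.filter fun x => ∀ i, 1 ≤ (x i : ℕ) ∧ (x i : ℕ) ≤ s - 1

/-- `B` is a down-set. -/
def isDownSet {k N : ℕ} (B : Finset (Fin N → Fin (k + 1))) : Prop :=
  ∀ y ∈ B, ∀ x : Fin N → Fin (k + 1), (∀ j, (x j : ℕ) ≤ (y j : ℕ)) → x ∈ B

/-!
A compressed set and an initial segment of `≤` are both down-sets (the slices of a compressed set
are initial segments of `[k]`, i.e. intervals `{0, …, m-1}`). For a down-set `S ⊆ [k]²` containing
`(1,1)` the shadow is `{(0,0)} ∪ {(0,b) : (1,b) ∈ S} ∪ {(a,0) : (a,1) ∈ S}`, so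
`|d(S)| = r + c + 1`, where `r` and `c` count the points of `S` off the axes on the lines
`x₀ = 1` and `x₁ = 1`; and `S` has at most `r c` points off the axes.

An initial segment `B` with a point off the axes contains every point on the axes, so `A` has at
least as many points off the axes as `B`. Off the axes `B` fills the squares `[1,m]²` one
L-shaped shell at a time, whence `(r_B + c_B - 1)² < 4 |B off the axes| ≤ 4 r_A c_A`, and AM-GM
turns this into `r_B + c_B ≤ r_A + c_A`. If `B` lies on the axes, then `|d(B)| ≤ 1`.
-/

lemma le_add_of_sq_lt_four_mul {n a b : ℕ} (h : (n - 1) ^ 2 < 4 * (a * b)) : n ≤ a + b := by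
  by_contra! hlt
  have : (a + b) ^ 2 ≤ (n - 1) ^ 2 := Nat.pow_le_pow_left (by omega) 2
  nlinarith [four_mul_le_sq_add a b]

section Order

variable {k N : ℕ}

lemma mem_rset {x : Fin N → Fin (k + 1)} {i : ℕ} {j : Fin N} : j ∈ rset x i ↔ (x j : ℕ) = i := by
  simp [rset]

lemma rset_zero_eq_empty {x : Fin N → Fin (k + 1)} (hx : ∀ j, x j ≠ 0) : rset x 0 = ∅ :=
  eq_empty_of_forall_notMem fun j hj => hx j (Fin.ext (mem_rset.1 hj))

lemma exists_rset_ne_of_ne {x y : Fin N → Fin (k + 1)} (hxy : x ≠ y) :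
    ∃ i, rset x i ≠ rset y i ∧ ∀ l, i < l → rset x l = rset y l := by
  set D := (range (k + 1)).filter fun i => rset x i ≠ rset y i
  have hD : D.Nonempty := by
    obtain ⟨j, hj⟩ := Function.ne_iff.1 hxy
    refine ⟨x j, mem_filter.2 ⟨mem_range.2 (x j).isLt, fun he => hj ?_⟩⟩
    have : j ∈ rset y (x j) := he ▸ mem_rset.2 rfl
    exact (Fin.ext (mem_rset.1 this)).symm
  refine ⟨D.max' hD, (mem_filter.1 (D.max'_mem hD)).2, fun l hl => ?_⟩
  by_contra hne
  obtain ⟨j, hj⟩ := not_forall.1 (mt Finset.ext hne)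
  have hlk : l < k + 1 := by
    by_cases hjx : j ∈ rset x l
    · exact mem_rset.1 hjx ▸ (x j).isLt
    · exact mem_rset.1 (by tauto : j ∈ rset y l) ▸ (y j).isLt
  exact absurd (D.le_max' l (mem_filter.2 ⟨mem_range.2 hlk, hne⟩)) (not_le.2 hl)

lemma ple_of_le {x y : Fin N → Fin (k + 1)} (h : ∀ j, x j ≤ y j) : ple x y := by
  by_cases hxy : x = y
  · exact Or.inl hxy
  right
  have hzero : rset y 0 ⊆ rset x 0 := fun j hj => by
    have := h j
    rw [mem_rset] at hj ⊢
    rw [Fin.le_def] at this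
    omega
  rcases (card_le_card hzero).lt_or_eq with hlt | heq
  · exact Or.inl hlt
  obtain ⟨i, hne, habove⟩ := exists_rset_ne_of_ne hxy
  -- At the top level `i` where the level sets differ, `x j = i` forces `y j = i`:
  -- `y j > i` would put `j` in `rset x (y j) = rset y (y j)`.
  have hXY : rset x i ⊆ rset y i := by
    intro j hj
    by_contra hjy
    have hlt : i < (y j : ℕ) := by
      have := h j
      rw [mem_rset] at hj hjy
      rw [Fin.le_def] at this
      omega
    have : j ∈ rset x (y j) := (habove _ hlt).symm ▸ mem_rset.2 rfl
    exact hjy (mem_rset.2 ((mem_rset.1 this).symm.trans (mem_rset.1 hj)))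
  have hdiff : (rset y i \ rset x i).Nonempty :=
    sdiff_nonempty.2 fun hYX => hne (hXY.antisymm hYX)
  refine Or.inr ⟨heq.symm, i, ?_, habove⟩
  obtain ⟨hmY, hmX⟩ := mem_sdiff.1 ((rset y i \ rset x i).max'_mem hdiff)
  refine ⟨_, hmY, hmX, fun j hj => ?_⟩
  rcases hj with ⟨hjx, hjy⟩ | hj
  · exact absurd (hXY hjx) hjy
  · exact (rset y i \ rset x i).le_max' j (mem_sdiff.2 hj)

lemma isInitSeg.isDownSet {B : Finset (Fin N → Fin (k + 1))} (hB : isInitSeg B) : isDownSet B :=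
  fun y hy x hxy => hB y hy x (ple_of_le hxy)

lemma plt_of_exists_eq_zero {x y : Fin N → Fin (k + 1)} (hx : ∃ j, x j = 0)
    (hy : ∀ j, y j ≠ 0) : plt x y := by
  obtain ⟨j, hj⟩ := hx
  left
  rw [rset_zero_eq_empty hy]
  exact card_pos.2 ⟨j, mem_rset.2 (by simp [hj])⟩

lemma plt_of_binLT_rset {x y : Fin N → Fin (k + 1)} {i : ℕ}
    (h0 : #(rset x 0) = #(rset y 0)) (hx : ∀ j, (x j : ℕ) ≤ i) (hy : ∀ j, (y j : ℕ) ≤ i)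
    (hi : binLT (rset x i) (rset y i)) : plt x y := by
  refine Or.inr ⟨h0, i, hi, fun l hl => ?_⟩
  have hempty (z : Fin N → Fin (k + 1)) (hz : ∀ j, (z j : ℕ) ≤ i) : rset z l = ∅ :=
    eq_empty_of_forall_notMem fun j hj => by have := hz j; rw [mem_rset] at hj; omega
  rw [hempty x hx, hempty y hy]

lemma plt_of_lt_of_eq {x y : Fin N → Fin (k + 1)} (hx0 : ∀ j, x j ≠ 0) (hy0 : ∀ j, y j ≠ 0)
    {i : Fin (k + 1)} (hx : ∀ j, x j < i) (hy : ∀ j, y j ≤ i) {j₀ : Fin N} (hj₀ : y j₀ = i) :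
    plt x y := by
  have hY : (rset y i).Nonempty := ⟨j₀, mem_rset.2 (by rw [hj₀])⟩
  refine plt_of_binLT_rset (i := i) (by rw [rset_zero_eq_empty hx0, rset_zero_eq_empty hy0])
    (fun j => (hx j).le) hy ⟨_, (rset y i).max'_mem hY, fun hm => ?_, fun j hj => ?_⟩
  · exact (hx _).ne (Fin.ext (mem_rset.1 hm))
  · rcases hj with ⟨hjx, -⟩ | ⟨hjy, -⟩
    · exact absurd (Fin.ext (mem_rset.1 hjx)) (hx j).ne
    · exact (rset y i).le_max' j hjy

end Order

section Compressed

variable {k : ℕ}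

lemma ple_one_iff {x y : Fin 1 → Fin (k + 1)} : ple x y ↔ x 0 ≤ y 0 := by
  refine ⟨?_, fun h => ple_of_le fun j => Subsingleton.elim j 0 ▸ h⟩
  rintro (rfl | hzero | ⟨-, i, ⟨m, hmy, hmx, -⟩, habove⟩)
  · exact le_rfl
  · by_cases hx : x 0 = 0
    · exact hx ▸ Fin.zero_le _
    · rw [rset_zero_eq_empty (x := x) fun j => Subsingleton.elim j 0 ▸ hx] at hzero
      simp at hzero
  · rw [Subsingleton.elim m 0, mem_rset] at hmy hmx
    by_contra! hlt
    have : (0 : Fin 1) ∈ rset y (x 0) := habove (x 0) (by omega) ▸ mem_rset.2 rfl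
    exact hmx (by rw [← hmy, mem_rset.1 this])

lemma IsCompressed.insertNth_mem_iff {n : ℕ} {A : Finset (Fin (n + 1) → Fin (k + 1))}
    (hA : IsCompressed A) (s : Fin (n + 1)) (t : Fin (k + 1)) (y : Fin n → Fin (k + 1)) :
    s.insertNth t y ∈ A ↔ y ∈ initSeg k n #(univ.filter fun y => s.insertNth t y ∈ A) := by
  conv_lhs => rw [← hA s]
  simp [compress, Fin.insertNth_inj]

lemma IsCompressed.insertNth_mem_of_le {A : Finset (Fin 2 → Fin (k + 1))} (hA : IsCompressed A)
    {s : Fin 2} {t : Fin (k + 1)} {y y' : Fin 1 → Fin (k + 1)} (hy : s.insertNth t y ∈ A)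
    (hy' : y' 0 ≤ y 0) : s.insertNth t y' ∈ A := by
  rw [hA.insertNth_mem_iff] at hy ⊢
  simp only [initSeg, mem_filter, mem_univ, true_and] at hy ⊢
  refine (card_le_card fun z hz => ?_).trans hy
  simp only [mem_filter, mem_univ, true_and, ple_one_iff] at hz ⊢
  exact hz.trans hy'

lemma pair_eta {α : Type*} (x : Fin 2 → α) : ![x 0, x 1] = x := by
  ext j; fin_cases j <;> rfl

lemma IsCompressed.isDownSet {A : Finset (Fin 2 → Fin (k + 1))} (hA : IsCompressed A) :
    isDownSet A := by
  have pair₀ (a b : Fin (k + 1)) : ![a, b] = (0 : Fin 2).insertNth a (fun _ => b) := by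
    ext j; fin_cases j <;> rfl
  have pair₁ (a b : Fin (k + 1)) : ![a, b] = (1 : Fin 2).insertNth b (fun _ => a) := by
    ext j; fin_cases j <;> rfl
  intro y hy x hxy
  rw [← pair_eta y, pair₁] at hy
  have hmid := hA.insertNth_mem_of_le hy (y' := fun _ => x 0) (hxy 0)
  rw [← pair₁, pair₀] at hmid
  have hx := hA.insertNth_mem_of_le hmid (y' := fun _ => x 1) (hxy 1)
  rwa [← pair₀, pair_eta] at hx

end Compressed

section ZeroFree

variable {k N : ℕ}

def zeroFreePart (S : Finset (Fin N → Fin (k + 1))) : Finset (Fin N → Fin (k + 1)) :=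
  S.filter fun x => ∀ j, x j ≠ 0

lemma mem_zeroFreePart {S : Finset (Fin N → Fin (k + 1))} {x : Fin N → Fin (k + 1)} :
    x ∈ zeroFreePart S ↔ x ∈ S ∧ ∀ j, x j ≠ 0 :=
  mem_filter

lemma isInitSeg.mem_of_exists_eq_zero {B : Finset (Fin N → Fin (k + 1))} (hB : isInitSeg B)
    {w : Fin N → Fin (k + 1)} (hw : w ∈ zeroFreePart B) {x : Fin N → Fin (k + 1)}
    (hx : ∃ j, x j = 0) : x ∈ B :=
  hB w (mem_zeroFreePart.1 hw).1 x (Or.inr (plt_of_exists_eq_zero hx (mem_zeroFreePart.1 hw).2))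

lemma card_zeroFreePart_le_card_zeroFreePart {A B : Finset (Fin N → Fin (k + 1))}
    (hB : ∀ x : Fin N → Fin (k + 1), (∃ j, x j = 0) → x ∈ B) (hcard : #B ≤ #A) :
    #(zeroFreePart B) ≤ #(zeroFreePart A) := by
  have hsplit (S : Finset (Fin N → Fin (k + 1))) :
      #(zeroFreePart S) + #(S.filter fun x => ∃ j, x j = 0) = #S := by
    simpa only [zeroFreePart, not_forall, not_not] using
      card_filter_add_card_filter_not (s := S) fun x => ∀ j, x j ≠ 0
  have hzero : #(A.filter fun x => ∃ j, x j = 0) ≤ #(B.filter fun x => ∃ j, x j = 0) :=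
    card_le_card fun x hx => mem_filter.2 ⟨hB x (mem_filter.1 hx).2, (mem_filter.1 hx).2⟩
  have := hsplit A
  have := hsplit B
  omega

end ZeroFree

section Shadow

variable {k N : ℕ}

lemma mem_dShadow {S : Finset (Fin N → Fin (k + 1))} {z : Fin N → Fin (k + 1)} :
    z ∈ dShadow S ↔ ∃ x ∈ S, ∃ i, x i ≠ 0 ∧ Function.update x i 0 = z := by
  simp [dShadow]

lemma dShadow_nonempty_iff {S : Finset (Fin N → Fin (k + 1))} :
    (dShadow S).Nonempty ↔ ∃ x ∈ S, x ≠ 0 := by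
  simp only [Finset.Nonempty, mem_dShadow, Function.ne_iff, Pi.zero_apply]
  exact ⟨fun ⟨_, x, hx, i, hi, _⟩ => ⟨x, hx, i, hi⟩, fun ⟨x, hx, i, hi⟩ => ⟨_, x, hx, i, hi, rfl⟩⟩

lemma dShadow_subset_singleton_zero {S : Finset (Fin 2 → Fin (k + 1))}
    (hS : ∀ x ∈ S, ∃ j, x j = 0) : dShadow S ⊆ {0} := by
  intro z hz
  obtain ⟨x, hx, i, hi, rfl⟩ := mem_dShadow.1 hz
  obtain ⟨j, hj⟩ := hS x hx
  rw [mem_singleton]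
  ext l
  fin_cases i <;> fin_cases j <;> fin_cases l <;> simp_all

lemma card_dShadow_le_of_forall_exists_eq_zero {A B : Finset (Fin 2 → Fin (k + 1))}
    (hB : isDownSet B) (hB0 : ∀ x ∈ B, ∃ j, x j = 0) (hcard : #B ≤ #A) :
    #(dShadow B) ≤ #(dShadow A) := by
  rcases (dShadow B).eq_empty_or_nonempty with h | h
  · simp [h]
  obtain ⟨x, hxB, hx⟩ := dShadow_nonempty_iff.1 h
  have h0B : 0 ∈ B := hB x hxB 0 fun j => Nat.zero_le _
  obtain ⟨y, hyA, hy⟩ := exists_mem_ne ((one_lt_card.2 ⟨x, hxB, 0, h0B, hx⟩).trans_le hcard) 0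
  calc #(dShadow B) ≤ #({0} : Finset (Fin 2 → Fin (k + 1))) :=
        card_le_card (dShadow_subset_singleton_zero hB0)
    _ = 1 := card_singleton 0
    _ ≤ #(dShadow A) := card_pos.2 (dShadow_nonempty_iff.2 ⟨y, hyA, hy⟩)

end Shadow

section DownSet

variable {k : ℕ}

def rowOne (S : Finset (Fin 2 → Fin (k + 1))) : Finset (Fin (k + 1)) :=
  univ.filter fun b => b ≠ 0 ∧ ![1, b] ∈ S

def colOne (S : Finset (Fin 2 → Fin (k + 1))) : Finset (Fin (k + 1)) :=
  univ.filter fun a => a ≠ 0 ∧ ![a, 1] ∈ S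

lemma pair_mem_zeroFreePart {S : Finset (Fin 2 → Fin (k + 1))} {a b : Fin (k + 1)} :
    ![a, b] ∈ zeroFreePart S ↔ ![a, b] ∈ S ∧ a ≠ 0 ∧ b ≠ 0 := by
  simp [mem_zeroFreePart, Fin.forall_fin_two]

lemma isDownSet.pair_mem {S : Finset (Fin 2 → Fin (k + 1))} (hS : isDownSet S)
    {a b c d : Fin (k + 1)} (h : ![c, d] ∈ S) (hac : a ≤ c) (hbd : b ≤ d) : ![a, b] ∈ S :=
  hS _ h _ fun j => by fin_cases j <;> simpa

lemma isDownSet.one_one_mem {S : Finset (Fin 2 → Fin (k + 1))} (hS : isDownSet S)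
    {w : Fin 2 → Fin (k + 1)} (hw : w ∈ zeroFreePart S) : ![1, 1] ∈ S := by
  rw [mem_zeroFreePart] at hw
  exact hS w hw.1 _ fun j => by
    fin_cases j <;> exact (Fin.one_le_of_ne_zero (hw.2 _) : (1 : Fin (k + 1)) ≤ _)

lemma isDownSet.dShadow_eq [NeZero k] {S : Finset (Fin 2 → Fin (k + 1))} (hS : isDownSet S)
    (h11 : ![1, 1] ∈ S) : dShadow S =
      insert 0 ((rowOne S).image (fun b => ![0, b]) ∪ (colOne S).image (fun a => ![a, 0])) := by
  have h10 : ![1, 0] ∈ S := hS.pair_mem h11 le_rfl (Fin.zero_le _)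
  ext z
  simp only [mem_dShadow, mem_insert, mem_union, mem_image, rowOne, colOne, mem_filter,
    mem_univ, true_and]
  constructor
  · rintro ⟨x, hx, i, hi, rfl⟩
    rw [← pair_eta x] at hx hi ⊢
    fin_cases i
    · by_cases hx1 : x 1 = 0
      · left; ext j; fin_cases j <;> simp [hx1]
      · refine Or.inr (Or.inl ⟨x 1, ⟨hx1, hS.pair_mem hx (Fin.one_le_of_ne_zero hi) le_rfl⟩, ?_⟩)
        ext j; fin_cases j <;> simp
    · by_cases hx0 : x 0 = 0
      · left; ext j; fin_cases j <;> simp [hx0]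
      · refine Or.inr (Or.inr ⟨x 0, ⟨hx0, hS.pair_mem hx le_rfl (Fin.one_le_of_ne_zero hi)⟩, ?_⟩)
        ext j; fin_cases j <;> simp
  · rintro (rfl | ⟨b, ⟨hb, hbS⟩, rfl⟩ | ⟨a, ⟨ha, haS⟩, rfl⟩)
    · exact ⟨_, h10, 0, by simp, by ext j; fin_cases j <;> rfl⟩
    · exact ⟨_, hbS, 0, by simp, by ext j; fin_cases j <;> rfl⟩
    · exact ⟨_, haS, 1, by simp, by ext j; fin_cases j <;> rfl⟩

lemma isDownSet.card_dShadow [NeZero k] {S : Finset (Fin 2 → Fin (k + 1))} (hS : isDownSet S)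
    (h11 : ![1, 1] ∈ S) : #(dShadow S) = #(rowOne S) + #(colOne S) + 1 := by
  have hinj₀ : Function.Injective fun b : Fin (k + 1) => ![0, b] := fun a b h => by
    simpa using congrFun h 1
  have hinj₁ : Function.Injective fun a : Fin (k + 1) => ![a, 0] := fun a b h => by
    simpa using congrFun h 0
  rw [hS.dShadow_eq h11, card_insert_of_notMem, card_union_of_disjoint,
    card_image_of_injective _ hinj₀, card_image_of_injective _ hinj₁]
  · rw [disjoint_left]
    intro z hz hz'
    simp only [mem_image, rowOne, colOne, mem_filter, mem_univ, true_and] at hz hz'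
    obtain ⟨b, ⟨hb, -⟩, rfl⟩ := hz
    obtain ⟨a, -, h⟩ := hz'
    exact hb (by simpa using (congrFun h 1).symm)
  · simp only [mem_union, mem_image, rowOne, colOne, mem_filter, mem_univ, true_and, not_or]
    constructor <;> rintro ⟨b, ⟨hb, -⟩, h⟩
    · exact hb (by simpa using congrFun h 1)
    · exact hb (by simpa using congrFun h 0)

lemma isDownSet.card_zeroFreePart_le {S : Finset (Fin 2 → Fin (k + 1))} (hS : isDownSet S) :
    #(zeroFreePart S) ≤ #(colOne S) * #(rowOne S) := by
  calc #(zeroFreePart S)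
      ≤ #((colOne S ×ˢ rowOne S).image fun p => ![p.1, p.2]) := card_le_card fun x hx => by
        rw [mem_zeroFreePart, ← pair_eta x] at hx
        obtain ⟨hx, hx0⟩ := hx
        refine mem_image.2 ⟨(x 0, x 1), mem_product.2 ⟨?_, ?_⟩, pair_eta x⟩ <;>
          simp only [colOne, rowOne, mem_filter, mem_univ, true_and]
        · exact ⟨hx0 0, hS.pair_mem hx le_rfl (Fin.one_le_of_ne_zero (hx0 1))⟩
        · exact ⟨hx0 1, hS.pair_mem hx (Fin.one_le_of_ne_zero (hx0 0)) le_rfl⟩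
    _ ≤ #(colOne S) * #(rowOne S) := card_image_le.trans (card_product _ _).le

lemma isDownSet.exists_rowOne_eq_Icc [NeZero k] {S : Finset (Fin 2 → Fin (k + 1))}
    (hS : isDownSet S) (h11 : ![1, 1] ∈ S) : ∃ p, ![1, p] ∈ S ∧ rowOne S = Icc 1 p := by
  have hmem : (1 : Fin (k + 1)) ∈ rowOne S := by simp [rowOne, h11]
  set p := (rowOne S).max' ⟨1, hmem⟩
  have hp : p ∈ rowOne S := max'_mem _ _
  simp only [rowOne, mem_filter, mem_univ, true_and] at hp
  refine ⟨p, hp.2, ext fun b => ⟨fun hb => mem_Icc.2 ⟨?_, le_max' _ b hb⟩, fun hb => ?_⟩⟩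
  · simp only [rowOne, mem_filter, mem_univ, true_and] at hb
    exact Fin.one_le_of_ne_zero hb.1
  · obtain ⟨h1b, hbp⟩ := mem_Icc.1 hb
    simp only [rowOne, mem_filter, mem_univ, true_and]
    exact ⟨(Fin.lt_of_lt_of_le Fin.one_pos' h1b).ne', hS.pair_mem hp.2 le_rfl hbp⟩

lemma isDownSet.exists_colOne_eq_Icc [NeZero k] {S : Finset (Fin 2 → Fin (k + 1))}
    (hS : isDownSet S) (h11 : ![1, 1] ∈ S) : ∃ q, ![q, 1] ∈ S ∧ colOne S = Icc 1 q := by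
  have hmem : (1 : Fin (k + 1)) ∈ colOne S := by simp [colOne, h11]
  set q := (colOne S).max' ⟨1, hmem⟩
  have hq : q ∈ colOne S := max'_mem _ _
  simp only [colOne, mem_filter, mem_univ, true_and] at hq
  refine ⟨q, hq.2, ext fun a => ⟨fun ha => mem_Icc.2 ⟨?_, le_max' _ a ha⟩, fun ha => ?_⟩⟩
  · simp only [colOne, mem_filter, mem_univ, true_and] at ha
    exact Fin.one_le_of_ne_zero ha.1
  · obtain ⟨h1a, haq⟩ := mem_Icc.1 ha
    simp only [colOne, mem_filter, mem_univ, true_and]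
    exact ⟨(Fin.lt_of_lt_of_le Fin.one_pos' h1a).ne', hS.pair_mem hq.2 haq le_rfl⟩

end DownSet

section InitialSegment

variable {k : ℕ}

lemma Fin.val_one_of_neZero [NeZero k] : ((1 : Fin (k + 1)) : ℕ) = 1 := by
  simp [Nat.pos_of_neZero]

lemma plt_pair_of_lt {a b c d i : Fin (k + 1)} (ha : a ≠ 0) (hb : b ≠ 0) (hc : c ≠ 0)
    (hd : d ≠ 0) (hai : a < i) (hbi : b < i) (hci : c ≤ i) (hdi : d ≤ i) (hcd : c = i ∨ d = i) :
    plt ![a, b] ![c, d] := by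
  obtain ⟨j₀, hj₀⟩ : ∃ j₀, ![c, d] j₀ = i := hcd.elim (⟨0, ·⟩) (⟨1, ·⟩)
  exact plt_of_lt_of_eq (Fin.forall_fin_two.2 ⟨ha, hb⟩) (Fin.forall_fin_two.2 ⟨hc, hd⟩)
    (Fin.forall_fin_two.2 ⟨hai, hbi⟩) (Fin.forall_fin_two.2 ⟨hci, hdi⟩) hj₀

lemma plt_pair_of_lt_shell [NeZero k] {p v : Fin (k + 1)} (hv : v ≠ 0) (hvp : v < p) :
    plt ![p, v] ![1, p] := by
  have hp : p ≠ 0 := (Fin.lt_of_le_of_lt (Fin.zero_le v) hvp).ne'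
  have h1p : (1 : Fin (k + 1)) ≤ p := Fin.one_le_of_ne_zero hp
  refine plt_of_binLT_rset (i := p) ?_ (fun j => ?_) (fun j => ?_) ⟨1, ?_, ?_, fun j _ => ?_⟩
  · rw [rset_zero_eq_empty, rset_zero_eq_empty] <;> intro j <;> fin_cases j <;> simp [hp, hv]
  · fin_cases j <;> simp [hvp.le]
  · fin_cases j
    exacts [h1p, le_rfl]
  · simp [mem_rset]
  · simpa [mem_rset] using fun h => hvp.ne (Fin.ext h)
  · fin_cases j <;> simp

lemma mul_add_one_le_card_zeroFreePart {S : Finset (Fin 2 → Fin (k + 1))}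
    {U V : Finset (Fin (k + 1))} (hUV : ∀ u ∈ U, ∀ v ∈ V, ![u, v] ∈ zeroFreePart S)
    {w : Fin 2 → Fin (k + 1)} (hw : w ∈ zeroFreePart S) (hwUV : w 0 ∉ U ∨ w 1 ∉ V) :
    #U * #V + 1 ≤ #(zeroFreePart S) := by
  have hinj : Function.Injective fun p : Fin (k + 1) × Fin (k + 1) => ![p.1, p.2] :=
    fun p q h => Prod.ext (by simpa using congrFun h 0) (by simpa using congrFun h 1)
  have hw' : w ∉ (U ×ˢ V).image fun p => ![p.1, p.2] := by
    rintro hw'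
    obtain ⟨p, hp, rfl⟩ := mem_image.1 hw'
    simp [(mem_product.1 hp).1, (mem_product.1 hp).2] at hwUV
  calc #U * #V + 1 = #(insert w ((U ×ˢ V).image fun p => ![p.1, p.2])) := by
        rw [card_insert_of_notMem hw', card_image_of_injective _ hinj, card_product]
    _ ≤ #(zeroFreePart S) := card_le_card <| insert_subset hw <| image_subset_iff.2 fun p hp =>
        hUV _ (mem_product.1 hp).1 _ (mem_product.1 hp).2

lemma isInitSeg.mul_pred_add_one_le_card_zeroFreePart [NeZero k]
    {B : Finset (Fin 2 → Fin (k + 1))} (hB : isInitSeg B) {p : Fin (k + 1)} (hpB : ![1, p] ∈ B)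
    (hp : 1 ≤ p) : (p : ℕ) * (p - 1) + 1 ≤ #(zeroFreePart B) := by
  have h0 : ((0 : Fin (k + 1)) : ℕ) = 0 := rfl
  have h1 := Fin.val_one_of_neZero (k := k)
  have hp0 : p ≠ 0 := by omega
  have hcount := mul_add_one_le_card_zeroFreePart (U := Icc 1 p) (V := Ico 1 p)
    (fun u hu v hv => by
      obtain ⟨hu1, hup⟩ := mem_Icc.1 hu
      obtain ⟨hv1, hvp⟩ := mem_Ico.1 hv
      have hu0 : u ≠ 0 := by omega
      have hv0 : v ≠ 0 := by omega
      refine pair_mem_zeroFreePart.2 ⟨hB _ hpB _ (Or.inr ?_), hu0, hv0⟩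
      rcases hup.lt_or_eq with hup | rfl
      · exact plt_pair_of_lt hu0 hv0 one_ne_zero hp0 hup hvp hp le_rfl (Or.inr rfl)
      · exact plt_pair_of_lt_shell hv0 hvp)
    (pair_mem_zeroFreePart.2 ⟨hpB, one_ne_zero, hp0⟩) (Or.inr (by simp))
  rwa [Fin.card_Icc, Fin.card_Ico, h1, Nat.add_sub_cancel] at hcount

lemma isInitSeg.pred_sq_add_one_le_card_zeroFreePart [NeZero k]
    {B : Finset (Fin 2 → Fin (k + 1))} (hB : isInitSeg B) {q : Fin (k + 1)} (hqB : ![q, 1] ∈ B)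
    (hq : 1 ≤ q) : ((q : ℕ) - 1) ^ 2 + 1 ≤ #(zeroFreePart B) := by
  have h0 : ((0 : Fin (k + 1)) : ℕ) = 0 := rfl
  have h1 := Fin.val_one_of_neZero (k := k)
  have hcount := mul_add_one_le_card_zeroFreePart (U := Ico 1 q) (V := Ico 1 q)
    (fun u hu v hv => by
      obtain ⟨hu1, huq⟩ := mem_Ico.1 hu
      obtain ⟨hv1, hvq⟩ := mem_Ico.1 hv
      have hu0 : u ≠ 0 := by omega
      have hv0 : v ≠ 0 := by omega
      exact pair_mem_zeroFreePart.2 ⟨hB _ hqB _ <| Or.inr <| plt_pair_of_lt hu0 hv0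
        (by omega) one_ne_zero huq hvq le_rfl hq (Or.inl rfl), hu0, hv0⟩)
    (pair_mem_zeroFreePart.2 ⟨hqB, by omega, one_ne_zero⟩) (Or.inl (by simp))
  rwa [Fin.card_Ico, h1, ← sq] at hcount

lemma isInitSeg.colOne_le_rowOne_add_one [NeZero k] {B : Finset (Fin 2 → Fin (k + 1))}
    (hB : isInitSeg B) {p q : Fin (k + 1)} (hrow : rowOne B = Icc 1 p) (hqB : ![q, 1] ∈ B)
    (hq : 1 ≤ q) : (q : ℕ) ≤ p + 1 := by
  have h0 : ((0 : Fin (k + 1)) : ℕ) = 0 := rfl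
  have h1 := Fin.val_one_of_neZero (k := k)
  by_contra! h
  obtain ⟨c, hc⟩ : ∃ c : Fin (k + 1), (c : ℕ) = q - 1 := ⟨⟨q - 1, by omega⟩, rfl⟩
  have hc0 : c ≠ 0 := by omega
  have hcB : ![1, c] ∈ B := hB _ hqB _ <| Or.inr <|
    plt_pair_of_lt (i := q) one_ne_zero hc0 (by omega) one_ne_zero (by omega) (by omega) le_rfl hq
      (Or.inl rfl)
  have : c ∈ rowOne B := by simp [rowOne, hcB, hc0]
  rw [hrow, mem_Icc] at this
  omega

lemma isInitSeg.sq_lt_four_mul_card_zeroFreePart [NeZero k] {B : Finset (Fin 2 → Fin (k + 1))}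
    (hB : isInitSeg B) (h11 : ![1, 1] ∈ B) :
    (#(rowOne B) + #(colOne B) - 1) ^ 2 < 4 * #(zeroFreePart B) := by
  obtain ⟨p, hpB, hrow⟩ := hB.isDownSet.exists_rowOne_eq_Icc h11
  obtain ⟨q, hqB, hcol⟩ := hB.isDownSet.exists_colOne_eq_Icc h11
  have hp : 1 ≤ p := by simpa [hrow] using (show (1 : Fin (k + 1)) ∈ rowOne B by simp [rowOne, h11])
  have hq : 1 ≤ q := by simpa [hcol] using (show (1 : Fin (k + 1)) ∈ colOne B by simp [colOne, h11])
  have hqp := hB.colOne_le_rowOne_add_one hrow hqB hq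
  have h1 := Fin.val_one_of_neZero (k := k)
  rw [hrow, hcol, Fin.card_Icc, Fin.card_Icc, h1, Nat.add_sub_cancel, Nat.add_sub_cancel]
  rcases Nat.lt_or_ge (p : ℕ) q with hpq | hqp'
  · -- `q = p + 1`: `B` contains the full square `[1,p]²` and the point `(p+1, 1)`
    have := hB.pred_sq_add_one_le_card_zeroFreePart hqB hq
    have hsum : (p : ℕ) + q - 1 = 2 * (q - 1) := by omega
    rw [hsum]
    nlinarith
  · -- `q ≤ p`: `B` contains `(1,p)` and everything that precedes it
    have := hB.mul_pred_add_one_le_card_zeroFreePart hpB hp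
    obtain ⟨P, hP⟩ : ∃ P, (p : ℕ) = P + 1 := ⟨p - 1, by omega⟩
    rw [hP, Nat.add_sub_cancel] at this
    have hsq : ((p : ℕ) + q - 1) ^ 2 ≤ (2 * P + 1) ^ 2 := Nat.pow_le_pow_left (by omega) 2
    nlinarith

end InitialSegment

/-- **Claim 3.** Let `k ≥ 1`, let `A ⊆ [k]^2` be a compressed set, and let `B` be the
initial segment of the `≤`-order on `[k]^2` with `|B| = |A|`. Then `|d(A)| ≥ |d(B)|`.
(The alphabet `[k]` with `k ≥ 1` is rendered as `Fin (k+1)`.) -/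
theorem claim3_dim_two (k : ℕ)
    (A : Finset (Fin (1 + 1) → Fin (k + 1))) (hA : IsCompressed A)
    (B : Finset (Fin (1 + 1) → Fin (k + 1)))
    (hB : isInitSeg B) (hcard : B.card = A.card) :
    (dShadow B).card ≤ (dShadow A).card := by
  by_cases hB0 : ∀ x ∈ B, ∃ j, x j = 0
  · exact card_dShadow_le_of_forall_exists_eq_zero hB.isDownSet hB0 hcard.le
  obtain ⟨w, hw⟩ : (zeroFreePart B).Nonempty := by
    simpa [Finset.Nonempty, mem_zeroFreePart] using hB0
  have : NeZero k := ⟨by rintro rfl; exact (mem_zeroFreePart.1 hw).2 0 (Fin.fin_one_eq_zero _)⟩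
  have hzf : #(zeroFreePart B) ≤ #(zeroFreePart A) :=
    card_zeroFreePart_le_card_zeroFreePart (fun _ => hB.mem_of_exists_eq_zero hw) hcard.le
  obtain ⟨v, hv⟩ : (zeroFreePart A).Nonempty := card_pos.1 ((card_pos.2 ⟨w, hw⟩).trans_le hzf)
  have h11B : ![1, 1] ∈ B := hB.isDownSet.one_one_mem hw
  have h11A : ![1, 1] ∈ A := hA.isDownSet.one_one_mem hv
  have hsum := le_add_of_sq_lt_four_mul <| (hB.sq_lt_four_mul_card_zeroFreePart h11B).trans_le <|
    Nat.mul_le_mul_left 4 (hzf.trans hA.isDownSet.card_zeroFreePart_le)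
  rw [hB.isDownSet.card_dShadow h11B, hA.isDownSet.card_dShadow h11A]
  omega
end

section
/- Let k ≥ 1, n ≥ 2 be integers and let A ⊆ [k]^n be a compressed set. If x, y ∈ [k]^n satisfy x ≤ y in the ≤-order, y ∈ A, and x_i = y_i for some index i, then x ∈ A. -/
open Finset
open scoped Classical

/-!
Deleting a coordinate `s` at which `x` and `y` agree removes the same point `s` (or nothing) from
every pair `R_i(x)`, `R_i(y)`. This changes neither the comparison of `|R_0|` nor the binary
comparison of the `R_i`, because the binary order is the colex order, which only sees the
symmetric difference. Hence `x ≤ y` descends to the section through `s`, and compressedness makes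
that section an initial segment of the (transitive, by colex) `≤`-order on `[k]^{n-1}`.
-/

lemma Finset.Colex.toColex_erase_lt_toColex_erase_iff {α : Type*} [PartialOrder α]
    [DecidableEq α] {s t : Finset α} {a : α} (h : a ∈ s ↔ a ∈ t) :
    toColex (s.erase a) < toColex (t.erase a) ↔ toColex s < toColex t := by
  by_cases ha : a ∈ s
  · simp only [← Finset.sdiff_singleton_eq_erase]
    exact toColex_sdiff_lt_toColex_sdiff (by simpa using ha) (by simpa [← h] using ha)
  · rw [Finset.erase_eq_of_notMem ha, Finset.erase_eq_of_notMem (h.not.1 ha)]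

namespace Fin

variable {N : ℕ} (p : Fin (N + 1))

lemma image_succAbove_preimage (X : Finset (Fin (N + 1))) :
    (X.preimage p.succAbove p.succAbove_right_injective.injOn).image p.succAbove = X.erase p := by
  ext j
  simp only [Finset.mem_image, Finset.mem_preimage, Finset.mem_erase]
  constructor
  · rintro ⟨j, hj, rfl⟩
    exact ⟨p.succAbove_ne j, hj⟩
  · rintro ⟨hne, hj⟩
    obtain ⟨j, rfl⟩ := exists_succAbove_eq hne
    exact ⟨j, hj, rfl⟩

lemma card_preimage_succAbove (X : Finset (Fin (N + 1))) :
    (X.preimage p.succAbove p.succAbove_right_injective.injOn).card = (X.erase p).card := by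
  rw [← image_succAbove_preimage, Finset.card_image_of_injective _ p.succAbove_right_injective]

lemma toColex_preimage_succAbove_lt_iff {X Y : Finset (Fin (N + 1))} (h : p ∈ X ↔ p ∈ Y) :
    toColex (X.preimage p.succAbove p.succAbove_right_injective.injOn) <
        toColex (Y.preimage p.succAbove p.succAbove_right_injective.injOn) ↔
      toColex X < toColex Y := by
  rw [← Colex.toColex_image_lt_toColex_image (strictMono_succAbove p), image_succAbove_preimage,
    image_succAbove_preimage, Colex.toColex_erase_lt_toColex_erase_iff h]

end Fin

lemma binLT_iff_toColex_lt {N : ℕ} {X Y : Finset (Fin N)} :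
    binLT X Y ↔ toColex X < toColex Y := by
  rw [Colex.toColex_lt_toColex_iff_exists_forall_lt]
  constructor
  · rintro ⟨m, hmY, hmX, hmax⟩
    exact ⟨m, hmY, hmX, fun b hbX hbY =>
      (hmax b (Or.inl ⟨hbX, hbY⟩)).lt_of_ne fun hbm => hmX (hbm ▸ hbX)⟩
  · rintro ⟨a, haY, haX, ha⟩
    have hne : (Y \ X).Nonempty := ⟨a, Finset.mem_sdiff.2 ⟨haY, haX⟩⟩
    obtain ⟨hmY, hmX⟩ := Finset.mem_sdiff.1 ((Y \ X).max'_mem hne)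
    refine ⟨(Y \ X).max' hne, hmY, hmX, ?_⟩
    rintro j (⟨hjX, hjY⟩ | hj)
    · exact ((ha j hjX hjY).trans_le ((Y \ X).le_max' a (Finset.mem_sdiff.2 ⟨haY, haX⟩))).le
    · exact (Y \ X).le_max' j (Finset.mem_sdiff.2 hj)

lemma plt_iff_toColex {k N : ℕ} {x y : Fin N → Fin (k + 1)} :
    plt x y ↔ (rset y 0).card < (rset x 0).card ∨
      ((rset x 0).card = (rset y 0).card ∧
        ∃ i : ℕ, toColex (rset x i) < toColex (rset y i) ∧
          ∀ j, i < j → rset x j = rset y j) := by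
  simp only [plt, binLT_iff_toColex_lt]

lemma plt_trans {k N : ℕ} {x y z : Fin N → Fin (k + 1)} (hxy : plt x y) (hyz : plt y z) :
    plt x z := by
  rw [plt_iff_toColex] at *
  rcases hxy with hxy | ⟨hcxy, i, hixy, hgtxy⟩ <;>
    rcases hyz with hyz | ⟨hcyz, i', hiyz, hgtyz⟩
  · exact Or.inl (hyz.trans hxy)
  · exact Or.inl (hcyz ▸ hxy)
  · exact Or.inl (hcxy ▸ hyz)
  refine Or.inr ⟨hcxy.trans hcyz, ?_⟩
  rcases lt_trichotomy i i' with hii' | rfl | hi'i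
  · exact ⟨i', hgtxy i' hii' ▸ hiyz,
      fun j hj => (hgtxy j (hii'.trans hj)).trans (hgtyz j hj)⟩
  · exact ⟨i, hixy.trans hiyz, fun j hj => (hgtxy j hj).trans (hgtyz j hj)⟩
  · exact ⟨i, (hgtyz i hi'i).symm ▸ hixy,
      fun j hj => (hgtxy j hj).trans (hgtyz j (hi'i.trans hj))⟩

lemma ple_trans {k N : ℕ} {x y z : Fin N → Fin (k + 1)} (hxy : ple x y) (hyz : ple y z) :
    ple x z := by
  rcases hxy with rfl | hxy
  · exact hyz
  rcases hyz with rfl | hyz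
  · exact Or.inr hxy
  · exact Or.inr (plt_trans hxy hyz)

lemma isInitSeg_initSeg (k N m : ℕ) : isInitSeg (initSeg k N m) := by
  intro y hy x hxy
  simp only [initSeg, Finset.mem_filter, Finset.mem_univ, true_and] at hy ⊢
  exact (Finset.card_le_card fun z hz => by simpa using ple_trans (by simpa using hz) hxy).trans hy

section removeNth

variable {k N : ℕ} (s : Fin (N + 1))

lemma rset_removeNth (x : Fin (N + 1) → Fin (k + 1)) (i : ℕ) :
    rset (s.removeNth x) i = (rset x i).preimage s.succAbove s.succAbove_right_injective.injOn := by
  ext j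
  simp only [rset, Finset.mem_filter, Finset.mem_preimage, Finset.mem_univ, true_and]
  rfl

lemma card_rset_removeNth_add (x : Fin (N + 1) → Fin (k + 1)) (i : ℕ) :
    (rset (s.removeNth x) i).card + (if s ∈ rset x i then 1 else 0) = (rset x i).card := by
  rw [rset_removeNth, Fin.card_preimage_succAbove]
  split_ifs with h
  · exact Finset.card_erase_add_one h
  · rw [Finset.erase_eq_of_notMem h, add_zero]

variable {s} {x y : Fin (N + 1) → Fin (k + 1)}

lemma plt_removeNth (hs : x s = y s) (hxy : plt x y) : plt (s.removeNth x) (s.removeNth y) := by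
  have hmem : ∀ i, s ∈ rset x i ↔ s ∈ rset y i := fun i => by simp [rset, hs]
  have hx := card_rset_removeNth_add s x 0
  have hy := card_rset_removeNth_add s y 0
  simp only [hmem] at hx
  rw [plt_iff_toColex] at hxy ⊢
  rcases hxy with hcard | ⟨hcard, i, hi, hgt⟩
  · exact Or.inl (by omega)
  refine Or.inr ⟨by omega, i, ?_, fun j hj => ?_⟩
  · rwa [rset_removeNth, rset_removeNth, Fin.toColex_preimage_succAbove_lt_iff _ (hmem i)]
  · rw [rset_removeNth, rset_removeNth, hgt j hj]

lemma ple_removeNth (hs : x s = y s) (hxy : ple x y) : ple (s.removeNth x) (s.removeNth y) :=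
  hxy.imp (congrArg s.removeNth) (plt_removeNth hs)

end removeNth

section coordSlice

variable {k n : ℕ}

noncomputable def coordSlice (A : Finset (Fin (n + 1) → Fin (k + 1))) (s : Fin (n + 1))
    (t : Fin (k + 1)) : Finset (Fin n → Fin (k + 1)) :=
  Finset.univ.filter fun y => s.insertNth t y ∈ A

variable {A : Finset (Fin (n + 1) → Fin (k + 1))} {s : Fin (n + 1)} {t : Fin (k + 1)}

@[simp]
lemma mem_coordSlice {y : Fin n → Fin (k + 1)} :
    y ∈ coordSlice A s t ↔ s.insertNth t y ∈ A := by
  simp [coordSlice]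

lemma insertNth_mem_compress {y : Fin n → Fin (k + 1)} :
    s.insertNth t y ∈ compress s A ↔ y ∈ initSeg k n (coordSlice A s t).card := by
  simp only [compress, Finset.mem_biUnion, Finset.mem_univ, true_and, Finset.mem_image,
    Fin.insertNth_injective2.eq_iff]
  constructor
  · rintro ⟨t, z, hz, rfl, rfl⟩
    exact hz
  · exact fun hy => ⟨t, y, hy, rfl, rfl⟩

lemma coordSlice_eq_initSeg_of_compress_eq (hA : compress s A = A) :
    coordSlice A s t = initSeg k n (coordSlice A s t).card := by
  ext y
  rw [← insertNth_mem_compress, hA, mem_coordSlice]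

lemma IsCompressed.isInitSeg_coordSlice (hA : IsCompressed A) (s : Fin (n + 1))
    (t : Fin (k + 1)) : isInitSeg (coordSlice A s t) := by
  rw [coordSlice_eq_initSeg_of_compress_eq (hA s)]
  exact isInitSeg_initSeg k n _

end coordSlice

theorem compressed_key_fact_general (k n : ℕ)
    (A : Finset (Fin (n + 1) → Fin (k + 1))) (hA : IsCompressed A)
    (x y : Fin (n + 1) → Fin (k + 1)) (hxy : ple x y) (hy : y ∈ A)
    (i : Fin (n + 1)) (hi : x i = y i) :
    x ∈ A := by
  have hy' : i.removeNth y ∈ coordSlice A i (y i) := by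
    rwa [mem_coordSlice, Fin.insertNth_self_removeNth]
  have hx' := hA.isInitSeg_coordSlice i (y i) _ hy' _ (ple_removeNth hi hxy)
  rwa [mem_coordSlice, ← hi, Fin.insertNth_self_removeNth] at hx'

/-- **(10.1).** Let `k ≥ 1`, `n ≥ 2`, and let `A ⊆ [k]^n` be compressed. If `x ≤ y`,
`y ∈ A` and `x_i = y_i` for some `i`, then `x ∈ A`.
(Dimension `n ≥ 2` is rendered as `n + 1` with `n ≥ 1`.) -/
theorem compressed_key_fact (k n : ℕ) (hn : 1 ≤ n)
    (A : Finset (Fin (n + 1) → Fin (k + 1))) (hA : IsCompressed A)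
    (x y : Fin (n + 1) → Fin (k + 1)) (hxy : ple x y) (hy : y ∈ A)
    (i : Fin (n + 1)) (hi : x i = y i) :
    x ∈ A :=
  compressed_key_fact_general k n A hA x y hxy hy i hi
end
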